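/- In the forest fire model (disjunctive scenario), where FF = L ∨ MD with context L_exo = MD_exo = 1, neither L = 1 alone nor MD = 1 alone satisfies AC2: for every set W⃗ of endogenous variables fixed at actual values, flipping only L (resp. only MD) still yields FF = 1; but the conjunction L = 1 ∧ MD = 1 is an actual cause of FF = 1. -/

import Mathlib

/-- A Boolean causal model: each endogenous variable `v : V` has a structural
equation `F v` computing its value from the exogenous assignment and the
values of the other endogenous variables. -/
structure CausalModel (U V : Type) where
  F : V → (U → Bool) → (V → Bool) → Bool

/-- `a` is a solution of the model `M` under context `u` and intervention `I`
(`I v = some b` means `v` has been set to the constant `b`). -/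
def Solves {U V : Type} (M : CausalModel U V) (u : U → Bool) (I : V → Option Bool)
    (a : V → Bool) : Prop :=
  ∀ v, a v = (I v).getD (M.F v u a)

/-- The intervention `[X⃗ ← x⃗', W⃗ ← w⃗]`. -/
def ivn {V : Type} [DecidableEq V] (Xs : Finset V) (x' : V → Bool) (W : Finset V)
    (w : V → Bool) : V → Option Bool :=
  fun v => if v ∈ Xs then some (x' v) else if v ∈ W then some (w v) else none

/-- AC1: the cause and the effect hold in the actual evaluation `act`. -/
def AC1 {U V : Type} (_M : CausalModel U V) (_u : U → Bool) (act : V → Bool)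
    (Xs : Finset V) (x : V → Bool) (φ : (V → Bool) → Prop) : Prop :=
  (∀ v ∈ Xs, act v = x v) ∧ φ act

/-- AC2: some contingency `W⃗` (fixed at its actual values) and some setting `x⃗'`
of the cause variables make `¬φ` hold. -/
def AC2 {U V : Type} [DecidableEq V] (M : CausalModel U V) (u : U → Bool) (act : V → Bool)
    (Xs : Finset V) (φ : (V → Bool) → Prop) : Prop :=
  ∃ (W : Finset V) (x' a : V → Bool), Solves M u (ivn Xs x' W act) a ∧ ¬ φ a

/-- AC3: minimality — no strict subset of the cause satisfies AC1 and AC2. -/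
def AC3 {U V : Type} [DecidableEq V] (M : CausalModel U V) (u : U → Bool) (act : V → Bool)
    (Xs : Finset V) (x : V → Bool) (φ : (V → Bool) → Prop) : Prop :=
  ∀ Xs' : Finset V, Xs' ⊂ Xs → ¬ (AC1 M u act Xs' x φ ∧ AC2 M u act Xs' φ)

/-- Modified Halpern–Pearl actual cause. -/
def IsCause {U V : Type} [DecidableEq V] (M : CausalModel U V) (u : U → Bool) (act : V → Bool)
    (Xs : Finset V) (x : V → Bool) (φ : (V → Bool) → Prop) : Prop :=
  AC1 M u act Xs x φ ∧ AC2 M u act Xs φ ∧ AC3 M u act Xs x φ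

/-- Forest fire endogenous variables. -/
inductive FV | L | MD | FF
deriving DecidableEq

/-- Forest fire exogenous variables. -/
inductive FU | Le | MDe
deriving DecidableEq

/-- The disjunctive forest fire model: FF = L ∨ MD. -/
def FM : CausalModel FU FV where
  F v u a :=
    match v with
    | .L => u .Le
    | .MD => u .MDe
    | .FF => a .L || a .MD

/-- Context: lightning and match drop both occur. -/
def fu : FU → Bool := fun _ => true

/-- Actual evaluation: everything is 1. -/
def fact : FV → Bool := fun _ => true

lemma Solves.eq_true_of_notMem {U V : Type} [DecidableEq V] {M : CausalModel U V}
    {u : U → Bool} {Xs W : Finset V} {x' w a : V → Bool} (hs : Solves M u (ivn Xs x' W w) a)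
    {v : V} (hv : v ∉ Xs) (hw : w v = true) (hF : M.F v u a = true) : a v = true := by
  have hv' := hs v
  simp only [ivn, hv, if_false] at hv'
  split_ifs at hv' <;> simp [hv', hw, hF]

lemma Finset.notMem_or_notMem_of_ssubset_pair {α : Type*} [DecidableEq α] {s : Finset α}
    {a b : α} (h : s ⊂ {a, b}) : a ∉ s ∨ b ∉ s := by
  by_contra! hab
  exact h.2 (Finset.insert_subset_iff.2 ⟨hab.1, Finset.singleton_subset_iff.2 hab.2⟩)

lemma solves_FM_FF_eq_true {Xs W : Finset FV} {x' a : FV → Bool}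
    (hs : Solves FM fu (ivn Xs x' W fact) a) (hFF : FV.FF ∉ Xs)
    (hXs : FV.L ∉ Xs ∨ FV.MD ∉ Xs) : a FV.FF = true := by
  -- whichever of `L`, `MD` is not flipped keeps its actual value `1`, which alone sustains `L ∨ MD`
  have hcause : a FV.L = true ∨ a FV.MD = true :=
    hXs.imp (fun hL => hs.eq_true_of_notMem hL rfl rfl)
      (fun hMD => hs.eq_true_of_notMem hMD rfl rfl)
  exact hs.eq_true_of_notMem hFF rfl (by simpa [FM] using hcause)

lemma not_AC2_FM {Xs : Finset FV} (hFF : FV.FF ∉ Xs) (hXs : FV.L ∉ Xs ∨ FV.MD ∉ Xs) :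
    ¬ AC2 FM fu fact Xs (fun a => a FV.FF = true) :=
  fun ⟨_, _, _, hs, hfire⟩ => hfire (solves_FM_FF_eq_true hs hFF hXs)

lemma AC2_FM_L_MD : AC2 FM fu fact {FV.L, FV.MD} (fun a => a FV.FF = true) :=
  ⟨∅, fun _ => false, fun _ => false, fun v => by cases v <;> rfl, by decide⟩

/-- In the disjunctive forest fire scenario, neither `L = 1` nor `MD = 1`
alone satisfies AC2 — flipping only one of them under any contingency fixed
at actual values leaves `FF = 1` — but `L = 1 ∧ MD = 1` is an actual cause
of `FF = 1`. -/
theorem stmt13 :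
    (∀ (W : Finset FV) (a : FV → Bool),
      Solves FM fu (ivn {FV.L} (fun _ => false) W fact) a → a FV.FF = true) ∧
    (∀ (W : Finset FV) (a : FV → Bool),
      Solves FM fu (ivn {FV.MD} (fun _ => false) W fact) a → a FV.FF = true) ∧
    ¬ AC2 FM fu fact {FV.L} (fun a => a FV.FF = true) ∧
    ¬ AC2 FM fu fact {FV.MD} (fun a => a FV.FF = true) ∧
    IsCause FM fu fact {FV.L, FV.MD} (fun _ => true) (fun a => a FV.FF = true) := by
  have hL : FV.L ∉ ({FV.MD} : Finset FV) := by decide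
  have hMD : FV.MD ∉ ({FV.L} : Finset FV) := by decide
  refine ⟨fun _ _ hs => solves_FM_FF_eq_true hs (by decide) (.inr hMD),
    fun _ _ hs => solves_FM_FF_eq_true hs (by decide) (.inl hL),
    not_AC2_FM (by decide) (.inr hMD), not_AC2_FM (by decide) (.inl hL),
    ⟨fun _ _ => rfl, rfl⟩, AC2_FM_L_MD, ?_⟩
  rintro Xs hXs ⟨-, hAC2⟩
  exact not_AC2_FM (fun hFF => by simpa using hXs.subset hFF)
    (Finset.notMem_or_notMem_of_ssubset_pair hXs) hAC2
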